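/- arXiv:2307.06313 — 3 statements merged into one kernel-verified Lean document; each statement's English description precedes it below -/
import Mathlib

section
/- Let p > 3 be a prime with p ≡ 3 (mod 4). Then ∑_{m=0}^{p-1} (∑_{a=0}^{p-1} e(ma⁴/p))² · (∑_{b=0}^{p-1} e(-mb⁴/p))² = p⁴ + p³ - p². -/
/-!
Write `G(m) = ∑ₐ e(ma²/p)`. Since `p ≡ 3 (mod 4)`, the map `a ↦ a^((p+3)/2)` permutes `𝔽_p` and its
square is `a ↦ a⁴`, so the quartic sums equal the quadratic ones. Substituting `(x, y) ↦ (x + y, x - y)`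
in `G(m) G(-m) = ∑ e(m(x² - y²)/p)` and summing over one variable by orthogonality gives
`G(m) G(-m) = p` for `m ≠ 0` (and `p²` for `m = 0`), so the sum is `p⁴ + (p - 1) p²`.
-/

open Finset

/-- `e y = e^{2πiy}`. -/
noncomputable def e (x : ℝ) : ℂ := Complex.exp (2 * Real.pi * x * Complex.I)

namespace FiniteField

variable {K : Type*} [Field K] [Fintype K]

theorem pow_bijective_of_coprime {k : ℕ} (hk : k ≠ 0) (h : (Fintype.card K - 1).Coprime k) :
    Function.Bijective (· ^ k : K → K) := by
  refine Finite.injective_iff_bijective.mp fun a b hab => ?_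
  by_cases ha : a = 0
  · subst ha
    rw [zero_pow hk, eq_comm, pow_eq_zero_iff hk] at hab
    exact hab.symm
  by_cases hb : b = 0
  · subst hb
    rw [zero_pow hk, pow_eq_zero_iff hk] at hab
    exact absurd hab ha
  have hunits : Function.Bijective (· ^ k : Kˣ → Kˣ) :=
    Nat.Coprime.pow_left_bijective (by rwa [Nat.card_units, Nat.card_eq_fintype_card])
  have := hunits.injective (a₁ := Units.mk0 a ha) (a₂ := Units.mk0 b hb) (Units.ext (by simpa))
  simpa using congrArg Units.val this

theorem sum_pow_four_eq_sum_sq {M : Type*} [AddCommMonoid M] (hK : Fintype.card K % 4 = 3)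
    (f : K → M) : ∑ a, f (a ^ 4) = ∑ a, f (a ^ 2) := by
  set q := Fintype.card K
  obtain ⟨t, ht⟩ : ∃ t, q = 4 * t + 3 := ⟨q / 4, by omega⟩
  have hcop : (q - 1).Coprime (2 * t + 3) := by
    rw [show q - 1 = 2 * (2 * t + 1) by omega, Nat.coprime_mul_iff_left]
    constructor
    · exact Nat.coprime_two_left.mpr (by simp [parity_simps])
    · rw [show 2 * t + 3 = 2 + (2 * t + 1) by ring, Nat.coprime_add_self_right]
      exact Nat.coprime_two_right.mpr (by simp [parity_simps])
  have hsq : ∀ a : K, (a ^ (2 * t + 3)) ^ 2 = a ^ 4 := fun a => by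
    rw [← pow_mul, show (2 * t + 3) * 2 = q + 3 by omega, pow_add, FiniteField.pow_card]
    ring
  calc ∑ a, f (a ^ 4) = ∑ a, f ((a ^ (2 * t + 3)) ^ 2) := by simp only [hsq]
    _ = ∑ a, f (a ^ 2) := Fintype.sum_bijective _ (pow_bijective_of_coprime (by omega) hcop) _ _
        fun _ => rfl

variable [DecidableEq K] {R : Type*} [CommRing R] [IsDomain R] {ψ : AddChar K R}

theorem sum_sq_mul_sum_neg_sq (hψ : ψ.IsPrimitive) (h2 : (2 : K) ≠ 0) (m : K) :
    (∑ a, ψ (m * a ^ 2)) * (∑ b, ψ (-(m * b ^ 2))) =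
      if m = 0 then (Fintype.card K : R) ^ 2 else (Fintype.card K : R) := by
  have hbij : Function.Bijective fun z : K × K => (z.1 + z.2, z.1 - z.2) := by
    refine Finite.injective_iff_bijective.mp fun z w h => ?_
    obtain ⟨hs, hd⟩ := Prod.mk.inj h
    ext
    · exact mul_left_cancel₀ h2 (by linear_combination hs + hd)
    · exact mul_left_cancel₀ h2 (by linear_combination hs - hd)
  calc (∑ a, ψ (m * a ^ 2)) * (∑ b, ψ (-(m * b ^ 2)))
      = ∑ z : K × K, ψ (m * (z.1 + z.2) * (z.1 - z.2)) := by
        rw [sum_mul_sum, ← Fintype.sum_prod_type']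
        refine Fintype.sum_congr _ _ fun z => ?_
        rw [← AddChar.map_add_eq_mul]
        ring_nf
    _ = ∑ w : K × K, ψ (m * w.1 * w.2) :=
        Fintype.sum_bijective _ hbij _ (fun w => ψ (m * w.1 * w.2)) fun _ => rfl
    _ = ∑ u : K, if m * u = 0 then (Fintype.card K : R) else 0 := by
        rw [Fintype.sum_prod_type]
        refine Fintype.sum_congr _ _ fun u => ?_
        simpa [mul_comm] using AddChar.sum_mulShift (m * u) hψ
    _ = _ := by
        by_cases hm : m = 0
        · simp [hm, sq]
        · simp [hm]

theorem sum_sum_pow_four_sq_mul_sum_neg_pow_four_sq (hψ : ψ.IsPrimitive)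
    (hK : Fintype.card K % 4 = 3) :
    ∑ m : K, (∑ a, ψ (m * a ^ 4)) ^ 2 * (∑ b, ψ (-(m * b ^ 4))) ^ 2 =
      (Fintype.card K : R) ^ 4 + (Fintype.card K : R) ^ 3 - (Fintype.card K : R) ^ 2 := by
  set q := Fintype.card K
  have h2 : (2 : K) ≠ 0 := Ring.two_ne_zero fun h => by
    have := FiniteField.even_card_iff_char_two.mp h
    omega
  have hterm : ∀ m : K, (∑ a, ψ (m * a ^ 4)) ^ 2 * (∑ b, ψ (-(m * b ^ 4))) ^ 2 =
      (q : R) ^ 2 + if m = 0 then (q : R) ^ 4 - (q : R) ^ 2 else 0 := fun m => by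
    rw [← mul_pow, sum_pow_four_eq_sum_sq hK fun x => ψ (m * x),
      sum_pow_four_eq_sum_sq hK fun x => ψ (-(m * x)), sum_sq_mul_sum_neg_sq hψ h2]
    split_ifs <;> ring
  simp only [hterm, sum_add_distrib, sum_const, card_univ, sum_ite_eq', mem_univ, if_true,
    nsmul_eq_mul]
  ring

end FiniteField

lemma ZMod.sum_range_natCast {M : Type*} [AddCommMonoid M] (n : ℕ) [NeZero n]
    (f : ZMod n → M) : ∑ i ∈ range n, f i = ∑ x : ZMod n, f x :=
  sum_nbij' (↑) ZMod.val (by simp) (by simp [ZMod.val_lt])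
    (fun i hi => by simpa [ZMod.val_natCast] using Nat.mod_eq_of_lt (mem_range.mp hi))
    (by simp) (by simp)

lemma e_intCast_div (N : ℕ) [NeZero N] (j : ℤ) :
    e ((j : ℝ) / N) = ZMod.stdAddChar (j : ZMod N) := by
  rw [ZMod.stdAddChar_apply, ZMod.toCircle_intCast, e]
  push_cast
  ring_nf

lemma e_natCast_div (N : ℕ) [NeZero N] (n : ℕ) :
    e ((n : ℝ) / N) = ZMod.stdAddChar (n : ZMod N) := by
  simpa using e_intCast_div N n

lemma e_neg_natCast_div (N : ℕ) [NeZero N] (n : ℕ) :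
    e (-(n : ℝ) / N) = ZMod.stdAddChar (-(n : ZMod N)) := by
  simpa using e_intCast_div N (-n)

theorem stmt_3_general (p : ℕ) (hp : p.Prime) (h4 : p % 4 = 3) :
    ∑ m ∈ range p,
      (∑ a ∈ range p, e ((m * a ^ 4 : ℕ) / p)) ^ 2 *
      (∑ b ∈ range p, e (-((m * b ^ 4 : ℕ) : ℝ) / p)) ^ 2
    = (p : ℂ) ^ 4 + (p : ℂ) ^ 3 - (p : ℂ) ^ 2 := by
  have : Fact p.Prime := ⟨hp⟩
  have h := FiniteField.sum_sum_pow_four_sq_mul_sum_neg_pow_four_sq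
    (ZMod.isPrimitive_stdAddChar p) (by rwa [ZMod.card])
  rw [ZMod.card, ← ZMod.sum_range_natCast] at h
  rw [← h]
  refine sum_congr rfl fun m _ => ?_
  simp only [← ZMod.sum_range_natCast, e_natCast_div, e_neg_natCast_div]
  push_cast
  rfl

theorem stmt_3 (p : ℕ) (hp : p.Prime) (h3 : 3 < p) (h4 : p % 4 = 3) :
    ∑ m ∈ range p,
      (∑ a ∈ range p, e ((m * a ^ 4 : ℕ) / p)) ^ 2 *
      (∑ b ∈ range p, e (-((m * b ^ 4 : ℕ) : ℝ) / p)) ^ 2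
    = (p : ℂ) ^ 4 + (p : ℂ) ^ 3 - (p : ℂ) ^ 2 :=
  stmt_3_general p hp h4
end

section
/- Let p be an odd prime with p ≡ 3 (mod 4), and let χ₁, χ₂ be odd Dirichlet characters mod p with χ₁χ₂ not the principal character. Then ∑_{a=0}^{p-1} ∑_{b=0}^{p-1} ∑_{c=0}^{p-1} ∑_{d=0}^{p-1} (χ₁χ₂)‾(a⁴+b⁴-c⁴-d⁴) · (χ₁χ₂)(a²+b²-c²-d²) = 0. -/
/-!
Scaling all four variables by a unit `t` multiplies the sum by `χ̄(t) ^ 4 χ(t) ^ 2 = χ̄(t) ^ 2`,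
so the sum vanishes unless `χ = χ₁χ₂` satisfies `χ ^ 2 = 1`. Since `p ≡ 3 (mod 4)`, `-1` is not a
square, so every unit is `±` a square; a character with `χ ^ 2 = 1` is trivial on squares, and
being even (as a product of two odd characters) it is then trivial altogether.
-/

open Finset

namespace ZMod

variable {n : ℕ}

lemma image_natCast_range [NeZero n] : (range n).image ((↑) : ℕ → ZMod n) = univ :=
  eq_univ_of_forall fun x => mem_image.2 ⟨x.val, mem_range.2 x.val_lt, x.natCast_zmod_val⟩

lemma injOn_natCast_range : Set.InjOn ((↑) : ℕ → ZMod n) (range n) := fun i hi j hj h => by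
  simpa [val_cast_of_lt (mem_range.1 hi), val_cast_of_lt (mem_range.1 hj)] using congrArg val h

end ZMod

variable {F : Type*} [Field F] [Fintype F]

lemma FiniteField.isSquare_or_isSquare_neg (hF : ¬IsSquare (-1 : F)) (a : F) :
    IsSquare a ∨ IsSquare (-a) := by
  classical
  refine or_iff_not_imp_left.2 fun ha => ?_
  have ha₀ : a ≠ 0 := by rintro rfl; exact ha ⟨0, by simp⟩
  rw [← quadraticChar_one_iff_isSquare (neg_ne_zero.2 ha₀), neg_eq_neg_one_mul, map_mul,
    quadraticChar_neg_one_iff_not_isSquare.2 hF, quadraticChar_neg_one_iff_not_isSquare.2 ha]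
  norm_num

lemma MulChar.eq_one_of_sq_eq_one {R : Type*} [CommMonoidWithZero R] (hF : ¬IsSquare (-1 : F))
    {χ : MulChar F R} (hsq : χ ^ 2 = 1) (hχ : χ (-1) = 1) : χ = 1 := by
  have hsquare {a : F} (ha : a ≠ 0) (ha' : IsSquare a) : χ a = 1 := by
    obtain ⟨v, rfl⟩ := ha'
    have hv : IsUnit v := isUnit_iff_ne_zero.2 (left_ne_zero_of_mul ha)
    rw [map_mul, ← sq, ← pow_apply' χ two_ne_zero, hsq, one_apply hv]
  refine MulChar.ext fun u => ?_
  rw [one_apply u.isUnit]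
  rcases FiniteField.isSquare_or_isSquare_neg hF u with h | h
  · exact hsquare u.ne_zero h
  · rw [← neg_neg (u : F), neg_eq_neg_one_mul, map_mul, hχ, one_mul,
      hsquare (neg_ne_zero.2 u.ne_zero) h]

noncomputable def quarticQuadraticSum (χ : MulChar F ℂ) : ℂ :=
  ∑ a : F, ∑ b : F, ∑ c : F, ∑ d : F,
    starRingEnd ℂ (χ (a ^ 4 + b ^ 4 - c ^ 4 - d ^ 4)) * χ (a ^ 2 + b ^ 2 - c ^ 2 - d ^ 2)

lemma Equiv.sum_comp_four {α β M : Type*} [Fintype α] [Fintype β] [AddCommMonoid M] (e : α ≃ β)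
    (g : β → β → β → β → M) :
    ∑ a, ∑ b, ∑ c, ∑ d, g (e a) (e b) (e c) (e d) = ∑ a, ∑ b, ∑ c, ∑ d, g a b c d := by
  simp only [← map_univ_equiv e, sum_map, Equiv.coe_toEmbedding]

-- Substitute `x ↦ t x`: the quartic form scales by `t ^ 4`, the quadratic one by `t ^ 2`,
-- and `χ⁻¹ t ^ 4 * χ t ^ 2 = χ⁻¹ t ^ 2`.
lemma quarticQuadraticSum_eq_inv_apply_sq_mul (χ : MulChar F ℂ) (t : Fˣ) :
    quarticQuadraticSum χ = χ⁻¹ t ^ 2 * quarticQuadraticSum χ := by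
  have hconj (x : F) : starRingEnd ℂ (χ x) = χ⁻¹ x := χ.star_apply' x
  have hχt : χ⁻¹ t * χ t = 1 := by rw [← MulChar.mul_apply, inv_mul_cancel, MulChar.one_apply_coe]
  unfold quarticQuadraticSum
  conv_lhs => rw [← Equiv.sum_comp_four t.mulLeft]
  simp only [mul_sum, Units.mulLeft_apply, mul_pow, ← mul_add, ← mul_sub, map_mul, map_pow, hconj]
  refine sum_congr rfl fun a _ => sum_congr rfl fun b _ => sum_congr rfl fun c _ =>
    sum_congr rfl fun d _ => ?_
  linear_combination (χ⁻¹ t ^ 2 * (χ⁻¹ (a ^ 4 + b ^ 4 - c ^ 4 - d ^ 4) *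
    χ (a ^ 2 + b ^ 2 - c ^ 2 - d ^ 2))) * (χ⁻¹ t * χ t + 1) * hχt

lemma quarticQuadraticSum_eq_zero {χ : MulChar F ℂ} (hχ : χ ^ 2 ≠ 1) :
    quarticQuadraticSum χ = 0 := by
  obtain ⟨t, ht⟩ : ∃ t : Fˣ, χ⁻¹ t ^ 2 ≠ 1 := by
    by_contra! h
    refine hχ (inv_eq_one.1 ?_)
    rw [← inv_pow]
    exact MulChar.ext fun t => by rw [MulChar.pow_apply_coe, h, MulChar.one_apply_coe]
  exact (mul_left_eq_self₀.1 (quarticQuadraticSum_eq_inv_apply_sq_mul χ t).symm).resolve_left ht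

theorem stmt_9 (p : ℕ) [Fact p.Prime] (h4 : p % 4 = 3)
    (χ₁ χ₂ : DirichletCharacter ℂ p) (hχ₁ : χ₁ (-1) = -1) (hχ₂ : χ₂ (-1) = -1)
    (hne : χ₁ * χ₂ ≠ 1) :
    ∑ a ∈ range p, ∑ b ∈ range p, ∑ c ∈ range p, ∑ d ∈ range p,
      (starRingEnd ℂ) ((χ₁ * χ₂)
        ((a : ZMod p) ^ 4 + (b : ZMod p) ^ 4 - (c : ZMod p) ^ 4 - (d : ZMod p) ^ 4)) *
      (χ₁ * χ₂)
        ((a : ZMod p) ^ 2 + (b : ZMod p) ^ 2 - (c : ZMod p) ^ 2 - (d : ZMod p) ^ 2)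
    = 0 := by
  have hF : ¬IsSquare (-1 : ZMod p) := by rw [ZMod.exists_sq_eq_neg_one_iff]; simpa
  have heven : (χ₁ * χ₂) (-1) = 1 := by rw [MulChar.mul_apply, hχ₁, hχ₂]; norm_num
  calc _ = quarticQuadraticSum (χ₁ * χ₂) := by
        simp only [quarticQuadraticSum, ← ZMod.image_natCast_range,
          sum_image ZMod.injOn_natCast_range]
    _ = 0 := quarticQuadraticSum_eq_zero fun h => hne (MulChar.eq_one_of_sq_eq_one hF h heven)
end

section
/- Let p be an odd prime with p ≡ 3 (mod 4), and let χ₁, χ₂ be odd Dirichlet characters mod p with χ₁χ₂ not principal. Then ∑_{a,b,c,d=0}^{p-1} (χ₁χ₂)‾(a⁵+b⁵-c⁵-d⁵) · (χ₁χ₂)(a+b-c-d) = 0. -/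
/-!
Put `ψ = χ₁ χ₂`, an even nontrivial character. Scaling `(a, b, c, d)` by a unit `u` multiplies
every summand by `conj ψ(u)^5 ψ(u) = ψ(u)^{-4}`, so the sum vanishes as soon as `ψ(u)^4 ≠ 1` for
some `u`. Such a `u` exists: since `-1` is not a square mod `p`, every unit is `±` a square, so
the even character `ψ` takes at each unit a value `ψ(b)^2 = ψ(c)^4`; if all fourth powers of
values of `ψ` were `1`, `ψ` would be trivial.
-/

open Finset

theorem FiniteField.isSquare_or_isSquare_neg_of_card_mod_four_eq_three {F : Type*} [Field F]
    [Fintype F] (hF : Fintype.card F % 4 = 3) (a : F) : IsSquare a ∨ IsSquare (-a) := by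
  classical
  by_cases ha : IsSquare a
  · exact .inl ha
  have ha0 : a ≠ 0 := by rintro rfl; exact ha .zero
  have hneg1 : quadraticChar F (-1) = -1 :=
    quadraticChar_neg_one_iff_not_isSquare.mpr (by rw [isSquare_neg_one_iff]; omega)
  right
  rw [← quadraticChar_one_iff_isSquare (neg_ne_zero.mpr ha0), neg_eq_neg_one_mul, map_mul, hneg1,
    quadraticChar_neg_one_iff_not_isSquare.mpr ha, neg_one_mul, neg_neg]

namespace MulChar

variable {F R : Type*} [Field F] [Fintype F] [CommMonoidWithZero R]

theorem exists_eq_sq_of_map_neg_one_eq_one (hF : Fintype.card F % 4 = 3) {ψ : MulChar F R}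
    (hψ : ψ (-1) = 1) (a : Fˣ) : ∃ b : Fˣ, ψ a = ψ b ^ 2 := by
  have hsq : ∀ r : F, (a : F) = r * r ∨ (a : F) = -(r * r) → ∃ b : Fˣ, ψ a = ψ b ^ 2 := by
    rintro r hr
    have hr0 : r ≠ 0 := by rintro rfl; simp at hr
    refine ⟨Units.mk0 r hr0, ?_⟩
    rcases hr with hr | hr
    · rw [hr, map_mul, Units.val_mk0, sq]
    · rw [hr, neg_eq_neg_one_mul, map_mul, hψ, one_mul, map_mul, Units.val_mk0, sq]
  rcases FiniteField.isSquare_or_isSquare_neg_of_card_mod_four_eq_three hF a with ⟨r, hr⟩ | ⟨r, hr⟩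
  · exact hsq r (.inl hr)
  · exact hsq r (.inr (neg_eq_iff_eq_neg.mp hr))

theorem exists_pow_four_ne_one_of_map_neg_one_eq_one (hF : Fintype.card F % 4 = 3)
    {ψ : MulChar F R} (hψ : ψ (-1) = 1) (hne : ψ ≠ 1) : ∃ u : Fˣ, ψ u ^ 4 ≠ 1 := by
  obtain ⟨a, ha⟩ := ne_one_iff.mp hne
  obtain ⟨b, hb⟩ := exists_eq_sq_of_map_neg_one_eq_one hF hψ a
  obtain ⟨c, hc⟩ := exists_eq_sq_of_map_neg_one_eq_one hF hψ b
  refine ⟨c, fun h ↦ ha ?_⟩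
  rw [hb, hc, ← pow_mul, h]

end MulChar

theorem Fintype.sum_eq_zero_of_map_smul_eq_mul {G V K : Type*} [Group G] [MulAction G V]
    [Fintype V] [Ring K] [NoZeroDivisors K] (Φ : V → K) (g : G) {c : K} (hc : c ≠ 1)
    (h : ∀ x, Φ (g • x) = c * Φ x) : ∑ x, Φ x = 0 := by
  have hscale : ∑ x, Φ x = c * ∑ x, Φ x := calc
    ∑ x, Φ x = ∑ x, Φ (g • x) := (Equiv.sum_comp (MulAction.toPerm g) Φ).symm
    _ = c * ∑ x, Φ x := by simp only [h, mul_sum]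
  have : (1 - c) * ∑ x, Φ x = 0 := by rw [sub_mul, one_mul, ← hscale, sub_self]
  exact (mul_eq_zero.mp this).resolve_left (sub_ne_zero.mpr hc.symm)

theorem MulChar.sum_starRingEnd_mul_eq_zero_of_homogeneous {R V : Type*} [CommRing R]
    [Finite Rˣ] [Fintype V] [MulAction Rˣ V] (ψ : MulChar R ℂ) {f g : V → R} {m n : ℕ}
    (hf : ∀ (u : Rˣ) x, f (u • x) = u ^ m * f x) (hg : ∀ (u : Rˣ) x, g (u • x) = u ^ n * g x)
    {u : Rˣ} (hu : ψ u ^ m ≠ ψ u ^ n) :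
    ∑ x, starRingEnd ℂ (ψ (f x)) * ψ (g x) = 0 := by
  have hu0 : ψ u ≠ 0 := apply_ne_zero_iff.mpr u.isUnit
  refine Fintype.sum_eq_zero_of_map_smul_eq_mul _ u (c := ψ u ^ n / ψ u ^ m) ?_ fun x ↦ ?_
  · rwa [Ne, div_eq_one_iff_eq (pow_ne_zero _ hu0), eq_comm]
  · simp only [← Complex.star_def, star_apply', inv_apply_eq_inv', hf, hg, map_mul, map_pow]
    ring

theorem Finset.sum_range_eq_sum_zmod_val {M : Type*} [AddCommMonoid M] (n : ℕ) [NeZero n]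
    (f : ℕ → M) : ∑ i ∈ range n, f i = ∑ x : ZMod n, f x.val :=
  .symm <| sum_nbij' ZMod.val (↑) (by simp [ZMod.val_lt]) (by simp)
    (fun x _ ↦ ZMod.natCast_zmod_val x) (fun _ hi ↦ ZMod.val_cast_of_lt (mem_range.mp hi))
    (fun _ _ ↦ rfl)

theorem stmt_10 (p : ℕ) [Fact p.Prime] (h4 : p % 4 = 3)
    (χ₁ χ₂ : DirichletCharacter ℂ p) (hχ₁ : χ₁ (-1) = -1) (hχ₂ : χ₂ (-1) = -1)
    (hne : χ₁ * χ₂ ≠ 1) :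
    ∑ a ∈ range p, ∑ b ∈ range p, ∑ c ∈ range p, ∑ d ∈ range p,
      (starRingEnd ℂ) ((χ₁ * χ₂)
        ((a : ZMod p) ^ 5 + (b : ZMod p) ^ 5 - (c : ZMod p) ^ 5 - (d : ZMod p) ^ 5)) *
      (χ₁ * χ₂) ((a : ZMod p) + (b : ZMod p) - (c : ZMod p) - (d : ZMod p))
    = 0 := by
  set ψ := χ₁ * χ₂
  have hψ : ψ (-1) = 1 := by rw [MulChar.mul_apply, hχ₁, hχ₂, neg_one_mul, neg_neg]
  obtain ⟨u, hu⟩ := MulChar.exists_pow_four_ne_one_of_map_neg_one_eq_one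
    (by rwa [ZMod.card]) hψ hne
  have hu' : ψ u ^ 5 ≠ ψ u ^ 1 := fun h ↦ hu <| by
    rwa [pow_succ, pow_one, mul_eq_right₀ (MulChar.apply_ne_zero_iff.mpr u.isUnit)] at h
  have := ψ.sum_starRingEnd_mul_eq_zero_of_homogeneous
    (f := fun x : ZMod p × ZMod p × ZMod p × ZMod p ↦
      x.1 ^ 5 + x.2.1 ^ 5 - x.2.2.1 ^ 5 - x.2.2.2 ^ 5)
    (g := fun x ↦ x.1 + x.2.1 - x.2.2.1 - x.2.2.2)
    (fun u x ↦ by simp only [Prod.smul_fst, Prod.smul_snd, Units.smul_def]; ring)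
    (fun u x ↦ by simp only [Prod.smul_fst, Prod.smul_snd, Units.smul_def]; ring) hu'
  simpa only [sum_range_eq_sum_zmod_val, ZMod.natCast_zmod_val, Fintype.sum_prod_type] using this
end
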